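/- Every N-player QoS satisfaction game (the complete-graph case) possesses at least one pure Nash equilibrium. -/

import Mathlib

open Finset

/-- Congestion level of channel `c`: number of players choosing `c`. -/
def cong {N C : ℕ} (x : Fin N → Option (Fin C)) (c : Fin C) : ℕ :=
  (Finset.univ.filter fun n => x n = some c).card

/-- Utility of player `n`: 1 if satisfied, 0 if dormant, -1 if suffering. -/
def util {N C : ℕ} (T : Fin N → Fin C → ℤ) (x : Fin N → Option (Fin C)) (n : Fin N) : ℤ :=
  match x n with
  | none => 0
  | some c => if (cong x c : ℤ) ≤ T n c then 1 else -1

/-- Pure Nash equilibrium: no unilateral deviation strictly improves utility. -/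
def IsNash {N C : ℕ} (T : Fin N → Fin C → ℤ) (x : Fin N → Option (Fin C)) : Prop :=
  ∀ (n : Fin N) (s : Option (Fin C)), util T (Function.update x n s) n ≤ util T x n

/-- Number of satisfied players. -/
def B {N C : ℕ} (T : Fin N → Fin C → ℤ) (x : Fin N → Option (Fin C)) : ℕ :=
  (Finset.univ.filter fun n => util T x n = 1).card

namespace QoSAux

variable {N C : ℕ}

/-- Threshold value of the chosen channel (0 if dormant). -/
def tval (T : Fin N → Fin C → ℤ) (x : Fin N → Option (Fin C)) (n : Fin N) : ℤ :=
  (x n).elim 0 (T n)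

lemma util_none {T : Fin N → Fin C → ℤ} {x : Fin N → Option (Fin C)} {n : Fin N}
    (h : x n = none) : util T x n = 0 := by
  unfold util; rw [h]

lemma util_some {T : Fin N → Fin C → ℤ} {x : Fin N → Option (Fin C)} {n : Fin N} {c : Fin C}
    (h : x n = some c) :
    util T x n = if (cong x c : ℤ) ≤ T n c then 1 else -1 := by
  unfold util; rw [h]

lemma util_le_one (T : Fin N → Fin C → ℤ) (x : Fin N → Option (Fin C)) (n : Fin N) :
    util T x n ≤ 1 := by
  cases h : x n with
  | none => rw [util_none h]; norm_num
  | some c => rw [util_some h]; split <;> norm_num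

lemma cong_eq_sum (x : Fin N → Option (Fin C)) (c : Fin C) :
    cong x c = ∑ m, if x m = some c then 1 else 0 := by
  classical
  simp [cong] -- Finset.card_filter

lemma cong_update (x : Fin N → Option (Fin C)) (n : Fin N) (s : Option (Fin C)) (c : Fin C) :
    cong (Function.update x n s) c + (if x n = some c then 1 else 0)
      = cong x c + (if s = some c then 1 else 0) := by
  classical
  rw [cong_eq_sum, cong_eq_sum,
    ← Finset.sum_erase_add _ _ (Finset.mem_univ n),
    ← Finset.sum_erase_add _ _ (Finset.mem_univ n), Function.update_self]
  have h : ∀ m ∈ Finset.univ.erase n,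
      (if Function.update x n s m = some c then (1:ℕ) else 0)
        = (if x m = some c then 1 else 0) := by
    intro m hm
    rw [Function.update_of_ne (Finset.ne_of_mem_erase hm)]
  rw [Finset.sum_congr rfl h]
  ring

lemma cong_le_of_feas {T : Fin N → Fin C → ℤ} {x : Fin N → Option (Fin C)}
    (feas : ∀ m, 0 ≤ util T x m) {n : Fin N} {c : Fin C} (h : x n = some c) :
    (cong x c : ℤ) ≤ T n c := by
  by_contra hlt
  have h0 := feas n
  rw [util_some h, if_neg hlt] at h0
  omega

lemma B_eq_card_active {T : Fin N → Fin C → ℤ} {x : Fin N → Option (Fin C)}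
    (feas : ∀ m, 0 ≤ util T x m) :
    B T x = (Finset.univ.filter fun n => (x n).isSome).card := by
  classical
  unfold B
  congr 1
  apply Finset.filter_congr
  intro n _
  cases h : x n with
  | none => simp [util_none h, h]
  | some c =>
    have := cong_le_of_feas feas h
    simp [util_some h, this, h]

lemma sum_tval_update (T : Fin N → Fin C → ℤ) (x : Fin N → Option (Fin C))
    (q : Fin N) (s : Option (Fin C)) :
    (∑ p, tval T (Function.update x q s) p) + tval T x q
      = (∑ p, tval T x p) + s.elim 0 (T q) := by
  classical
  rw [← Finset.sum_erase_add _ _ (Finset.mem_univ q),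
    ← Finset.sum_erase_add _ _ (Finset.mem_univ q)]
  have h : ∀ p ∈ Finset.univ.erase q,
      tval T (Function.update x q s) p = tval T x p := by
    intro p hp
    unfold tval
    rw [Function.update_of_ne (Finset.ne_of_mem_erase hp)]
  rw [Finset.sum_congr rfl h]
  have : tval T (Function.update x q s) q = s.elim 0 (T q) := by
    unfold tval; rw [Function.update_self]
  rw [this]
  ring

end QoSAux

open QoSAux in
/-- Every QoS satisfaction game possesses at least one pure Nash equilibrium. -/
theorem nash_exists {N C : ℕ} (T : Fin N → Fin C → ℤ) :
    ∃ x : Fin N → Option (Fin C), IsNash T x := by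
  classical
  -- feasible profiles: nobody suffers
  set S : Finset (Fin N → Option (Fin C)) :=
    Finset.univ.filter (fun x => ∀ m, 0 ≤ util T x m) with hS
  have hne : S.Nonempty := by
    refine ⟨fun _ => none, ?_⟩
    simp only [hS, Finset.mem_filter, Finset.mem_univ, true_and]
    intro m
    rw [util_none rfl]
  set key : (Fin N → Option (Fin C)) → ℕ ×ₗ ℤ :=
    fun x => toLex (B T x, ∑ p, tval T x p) with hkey
  obtain ⟨x, hxS, hmax⟩ := Finset.exists_max_image S key hne
  have feas : ∀ m, 0 ≤ util T x m := by
    simpa only [hS, Finset.mem_filter, Finset.mem_univ, true_and] using hxS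
  refine ⟨x, ?_⟩
  intro n s
  cases hxn : x n with
  | some c =>
    -- player n is satisfied already
    have h1 : util T x n = 1 := by
      rw [util_some hxn, if_pos (cong_le_of_feas feas hxn)]
    rw [h1]; exact util_le_one _ _ _
  | none =>
    rw [util_none hxn]
    cases s with
    | none =>
      rw [util_none (show Function.update x n none n = none from Function.update_self ..)]
    | some c =>
      set y := Function.update x n (some c) with hy
      have hyn : y n = some c := Function.update_self ..
      by_contra hgt
      push_neg at hgt
      -- so util of y at n is 1, i.e. cong y c ≤ T n c
      have hsat : (cong y c : ℤ) ≤ T n c := by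
        by_contra hns
        rw [util_some hyn, if_neg hns] at hgt
        omega
      -- cong facts for y
      have hcyc : cong y c = cong x c + 1 := by
        have h2 := cong_update x n (some c) c
        rw [← hy, if_pos rfl, if_neg (by simp [hxn])] at h2
        omega
      have hcyc' : ∀ c', c' ≠ c → cong y c' = cong x c' := by
        intro c' hc'
        have h2 := cong_update x n (some c) c'
        rw [← hy, if_neg (fun h => hc' (Option.some_inj.mp h).symm),
          if_neg (by simp [hxn])] at h2
        omega
      have hTn : (cong x c : ℤ) + 1 ≤ T n c := by rw [hcyc] at hsat; exact_mod_cast hsat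
      by_cases ha : ∀ m, x m = some c → (cong x c : ℤ) + 1 ≤ T m c
      · -- Case (a): y is feasible and has strictly more satisfied players
        have feasy : ∀ m, 0 ≤ util T y m := by
          intro m
          by_cases hmn : m = n
          · subst hmn
            rw [util_some hyn, if_pos hsat]; norm_num
          · have hym : y m = x m := Function.update_of_ne hmn _ _
            cases hxm : x m with
            | none => rw [util_none (hym.trans hxm)]
            | some c' =>
              have hle : (cong y c' : ℤ) ≤ T m c' := by
                by_cases hcc : c' = c
                · subst hcc
                  rw [hcyc]; push_cast; exact ha m hxm
                · rw [hcyc' c' hcc]; exact cong_le_of_feas feas hxm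
              rw [util_some (hym.trans hxm), if_pos hle]; norm_num
        have hyS : y ∈ S := by
          simp only [hS, Finset.mem_filter, Finset.mem_univ, true_and]; exact feasy
        have hBy : B T x < B T y := by
          rw [B_eq_card_active feas, B_eq_card_active feasy]
          apply Finset.card_lt_card
          constructor
          · intro m hm
            simp only [Finset.mem_filter, Finset.mem_univ, true_and] at hm ⊢
            by_cases hmn : m = n
            · subst hmn; rw [hyn]; rfl
            · rw [show y m = x m from Function.update_of_ne hmn _ _]; exact hm
          · intro hsub
            have h3 := hsub (by simp [hyn] : n ∈ Finset.univ.filter fun m => (y m).isSome)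
            simp only [Finset.mem_filter, Finset.mem_univ, true_and, hxn] at h3
            simp at h3
        have := hmax y hyS
        rw [hkey] at this
        have hlt : key x < key y := by
          rw [hkey]
          exact Prod.Lex.lt_iff.mpr (Or.inl hBy)
        exact absurd (hmax y hyS) (not_le_of_gt hlt)
      · -- Case (b): swap out a player m on c with threshold exactly cong x c
        push_neg at ha
        obtain ⟨m, hxm, hTm⟩ := ha
        have hTmeq : T m c = (cong x c : ℤ) := by
          have := cong_le_of_feas feas hxm
          omega
        have hmn : m ≠ n := by
          intro h; rw [h, hxn] at hxm; cases hxm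
        set z := Function.update y m none with hz
        have hzm : z m = none := Function.update_self ..
        have hym : y m = some c := by
          rw [hy, Function.update_of_ne hmn, hxm]
        have hzn : z n = some c := by
          rw [hz, Function.update_of_ne (Ne.symm hmn), hyn]
        -- congestion is unchanged in z
        have hcz : ∀ c', cong z c' = cong x c' := by
          intro c'
          have h2 := cong_update y m none c'
          rw [← hz] at h2
          by_cases hcc : c' = c
          · subst hcc
            rw [if_pos hym, if_neg (by simp)] at h2
            rw [hcyc] at h2
            omega
          · rw [if_neg (by rw [hym]; exact fun h => hcc (Option.some_inj.mp h).symm),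
              if_neg (by simp)] at h2
            rw [hcyc' c' hcc] at h2
            omega
        have feasz : ∀ p, 0 ≤ util T z p := by
          intro p
          by_cases hpm : p = m
          · subst hpm; rw [util_none hzm]
          · by_cases hpn : p = n
            · subst hpn
              have : (cong z c : ℤ) ≤ T p c := by rw [hcz]; omega
              rw [util_some hzn, if_pos this]; norm_num
            · have hzp : z p = x p := by
                rw [hz, Function.update_of_ne hpm, hy, Function.update_of_ne hpn]
              cases hxp : x p with
              | none => rw [util_none (hzp.trans hxp)]
              | some c' =>
                have : (cong z c' : ℤ) ≤ T p c' := by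
                  rw [hcz]; exact cong_le_of_feas feas hxp
                rw [util_some (hzp.trans hxp), if_pos this]; norm_num
        have hzS : z ∈ S := by
          simp only [hS, Finset.mem_filter, Finset.mem_univ, true_and]; exact feasz
        -- B is unchanged
        have hBz : B T z = B T x := by
          rw [B_eq_card_active feas, B_eq_card_active feasz]
          have hact : (Finset.univ.filter fun p => (z p).isSome)
              = insert n ((Finset.univ.filter fun p => (x p).isSome).erase m) := by
            ext p
            simp only [Finset.mem_filter, Finset.mem_univ, true_and, Finset.mem_insert,
              Finset.mem_erase]
            constructor
            · intro hp
              by_cases hpn : p = n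
              · exact Or.inl hpn
              · by_cases hpm : p = m
                · subst hpm; rw [hzm] at hp; exact absurd hp (by simp)
                · refine Or.inr ⟨hpm, ?_⟩
                  rwa [hz, Function.update_of_ne hpm, hy, Function.update_of_ne hpn] at hp
            · rintro (hpn | ⟨hpm, hp⟩)
              · subst hpn; rw [hzn]; rfl
              · by_cases hpn : p = n
                · subst hpn; rw [hzn]; rfl
                · rwa [hz, Function.update_of_ne hpm, hy, Function.update_of_ne hpn]
          have hmmem : m ∈ Finset.univ.filter fun p => (x p).isSome := by
            simp [hxm]
          have hnnot : n ∉ (Finset.univ.filter fun p => (x p).isSome).erase m := by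
            simp [hxn]
          rw [hact, Finset.card_insert_of_notMem hnnot, Finset.card_erase_of_mem hmmem]
          have h4 := Finset.card_pos.mpr ⟨m, hmmem⟩
          omega
        -- sum of thresholds strictly increases
        have hsum : (∑ p, tval T x p) < ∑ p, tval T z p := by
          have h1 := sum_tval_update T x n (some c)
          have h2 := sum_tval_update T y m none
          rw [← hy] at h1
          rw [← hz] at h2
          have htx : tval T x n = 0 := by unfold tval; rw [hxn]; rfl
          have hty : tval T y m = T m c := by unfold tval; rw [hym]; rfl
          simp only [Option.elim_some, Option.elim_none] at h1 h2
          rw [htx] at h1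
          rw [hty] at h2
          -- h1 : ∑ y + 0 = ∑ x + T n c ;  h2 : ∑ z + T m c = ∑ y + 0
          omega
        have hlt : key x < key z := by
          rw [hkey]
          exact Prod.Lex.lt_iff.mpr (Or.inr ⟨hBz.symm, hsum⟩)
        exact absurd (hmax z hzS) (not_le_of_gt hlt)
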